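/- For every integer n ≥ 1 and m ≥ 1, ∑_{r=1}^{n} (-1)^r r^m F_r = ∑_{i=1}^{m} C(m,i) (-1)^{i+1} ∑_{r=1}^{n} (-1)^r r^{m-i} F_r + ∑_{i=1}^{m} C(m,i) ∑_{r=1}^{n-1} (-1)^r r^{m-i} F_r - n^m [(-1)^{n+1} F_{n+1} + (-1)^{n+2} F_n]. -/

import Mathlib

/-! By the binomial theorem the two sums over `i` collapse to
`∑_{r ≤ n} (-1)^r (r^m - (r-1)^m) F_r` and `∑_{r < n} (-1)^r ((r+1)^m - r^m) F_r`.
What remains is a summation by parts against `(-1)^r F_r`: from `F_{r+1} = F_r + F_{r-1}`,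
every `f` with `f 0 = 0` satisfies
`∑_{r ≤ n} (-1)^r f(r-1) F_r = ∑_{r < n} (-1)^r (f(r+1) - f r) F_r + (-1)^n f(n) F_{n-1}`,
and `f x = x^m` vanishes at `0` since `m ≥ 1`. -/

open Finset

section

variable {R : Type*} [CommRing R]

theorem add_pow_sub_pow_eq_sum_Icc (x y : R) (m : ℕ) :
    (x + y) ^ m - x ^ m = ∑ i ∈ Icc 1 m, (m.choose i : R) * y ^ i * x ^ (m - i) := by
  rw [add_comm, add_pow, range_eq_Ico, sum_eq_sum_Ico_succ_bot m.succ_pos]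
  simp only [pow_zero, one_mul, Nat.sub_zero, Nat.choose_zero_right, Nat.cast_one, mul_one,
    add_sub_cancel_left]
  exact sum_congr rfl fun i _ => by ring

theorem sum_Icc_choose_mul_sum_pow {ι : Type*} (s : Finset ι) (w x v : ι → R) (y : R) (m : ℕ) :
    ∑ i ∈ Icc 1 m, (m.choose i : R) * y ^ i * ∑ j ∈ s, w j * x j ^ (m - i) * v j =
      ∑ j ∈ s, w j * ((x j + y) ^ m - x j ^ m) * v j := by
  simp_rw [add_pow_sub_pow_eq_sum_Icc, mul_sum, sum_mul]
  rw [sum_comm]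
  exact sum_congr rfl fun j _ => sum_congr rfl fun i _ => by ring

theorem sum_neg_one_pow_mul_fib_by_parts (f : ℤ → R) (hf : f 0 = 0) (n : ℕ) :
    ∑ r ∈ Icc 1 (n + 1), (-1) ^ r * f (r - 1) * (Nat.fib r : R) =
      ∑ r ∈ Icc 1 n, (-1) ^ r * (f (r + 1) - f r) * (Nat.fib r : R) +
        (-1) ^ (n + 1) * f (n + 1) * (Nat.fib n : R) := by
  induction n with
  | zero => simp [hf]
  | succ n ih =>
    rw [sum_Icc_succ_top (by omega), ih, sum_Icc_succ_top (by omega)]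
    push_cast [Nat.fib_add_two, add_sub_cancel_right]
    ring

end

theorem stmt_9_general (n m : ℕ) (hm : 1 ≤ m) :
    ∑ r ∈ Finset.Icc 1 n, (-1 : ℤ) ^ r * (r : ℤ) ^ m * (Nat.fib r : ℤ) =
      ∑ i ∈ Finset.Icc 1 m, (m.choose i : ℤ) * (-1) ^ (i + 1) *
          ∑ r ∈ Finset.Icc 1 n, (-1 : ℤ) ^ r * (r : ℤ) ^ (m - i) * (Nat.fib r : ℤ)
      + ∑ i ∈ Finset.Icc 1 m, (m.choose i : ℤ) *
          ∑ r ∈ Finset.Icc 1 (n - 1), (-1 : ℤ) ^ r * (r : ℤ) ^ (m - i) * (Nat.fib r : ℤ)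
      - (n : ℤ) ^ m * ((-1) ^ (n + 1) * (Nat.fib (n + 1) : ℤ)
          + (-1) ^ (n + 2) * (Nat.fib n : ℤ)) := by
  rcases n with _ | n
  · simp [zero_pow (by omega : m ≠ 0)]
  have h1 : ∑ i ∈ Icc 1 m, (m.choose i : ℤ) * (-1) ^ (i + 1) *
        ∑ r ∈ Icc 1 (n + 1), (-1 : ℤ) ^ r * (r : ℤ) ^ (m - i) * (Nat.fib r : ℤ) =
      ∑ r ∈ Icc 1 (n + 1), (-1 : ℤ) ^ r * ((r : ℤ) ^ m - (r - 1) ^ m) * (Nat.fib r : ℤ) := by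
    calc _ = -∑ i ∈ Icc 1 m, (m.choose i : ℤ) * (-1) ^ i *
          ∑ r ∈ Icc 1 (n + 1), (-1 : ℤ) ^ r * (r : ℤ) ^ (m - i) * (Nat.fib r : ℤ) := by
          rw [← sum_neg_distrib]
          exact sum_congr rfl fun i _ => by ring
      _ = _ := by
          rw [sum_Icc_choose_mul_sum_pow, ← sum_neg_distrib]
          exact sum_congr rfl fun r _ => by ring
  have h2 : ∑ i ∈ Icc 1 m, (m.choose i : ℤ) *
        ∑ r ∈ Icc 1 n, (-1 : ℤ) ^ r * (r : ℤ) ^ (m - i) * (Nat.fib r : ℤ) =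
      ∑ r ∈ Icc 1 n, (-1 : ℤ) ^ r * (((r : ℤ) + 1) ^ m - r ^ m) * (Nat.fib r : ℤ) := by
    simpa using sum_Icc_choose_mul_sum_pow (Icc 1 n) _ (fun r : ℕ => (r : ℤ)) _ 1 m
  have key := sum_neg_one_pow_mul_fib_by_parts (fun x : ℤ => x ^ m) (zero_pow (by omega)) n
  rw [Nat.add_sub_cancel, h1, h2]
  simp only [mul_sub, sub_mul, sum_sub_distrib] at key ⊢
  push_cast [Nat.fib_add_two] at key ⊢
  linear_combination key

theorem stmt_9 (n m : ℕ) (hn : 1 ≤ n) (hm : 1 ≤ m) :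
    ∑ r ∈ Finset.Icc 1 n, (-1 : ℤ) ^ r * (r : ℤ) ^ m * (Nat.fib r : ℤ) =
      ∑ i ∈ Finset.Icc 1 m, (m.choose i : ℤ) * (-1) ^ (i + 1) *
          ∑ r ∈ Finset.Icc 1 n, (-1 : ℤ) ^ r * (r : ℤ) ^ (m - i) * (Nat.fib r : ℤ)
      + ∑ i ∈ Finset.Icc 1 m, (m.choose i : ℤ) *
          ∑ r ∈ Finset.Icc 1 (n - 1), (-1 : ℤ) ^ r * (r : ℤ) ^ (m - i) * (Nat.fib r : ℤ)
      - (n : ℤ) ^ m * ((-1) ^ (n + 1) * (Nat.fib (n + 1) : ℤ)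
          + (-1) ^ (n + 2) * (Nat.fib n : ℤ)) :=
  stmt_9_general n m hm
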